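/- For plane trees with edge increments +-1, setting T = T(t) = (1 - 4t - sqrt(1-8t))/(4t) (the generating function of such labelled trees with at least one edge), the specialization F_2(t, e^{iu}, e^{-iu}) = (1+T)(1 + T^2 cos^2 u) / ((1-T)(1 - T cos u)^2). -/

import Mathlib

open Complex

/-- Plane trees whose edges carry labels `±1` (`true` for `+1`, `false` for `-1`). -/
inductive PTree1 where
  | node : List (Bool × PTree1) → PTree1

mutual
/-- Number of edges. -/
def PTree1.edges : PTree1 → ℕ
  | .node cs => PTree1.edgesList cs
def PTree1.edgesList : List (Bool × PTree1) → ℕ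
  | [] => 0
  | (_, t) :: rest => t.edges + 1 + PTree1.edgesList rest
end

mutual
/-- `∑_{v ∈ T} x^{ℓ(v)}` for the induced labelling (root labelled `0`). -/
noncomputable def PTree1.labelSum : PTree1 → ℂ → ℂ
  | .node cs, x => 1 + PTree1.labelSumList cs x
noncomputable def PTree1.labelSumList : List (Bool × PTree1) → ℂ → ℂ
  | [], _ => 0
  | (b, t) :: rest, x =>
      (if b then x else x⁻¹) * t.labelSum x + PTree1.labelSumList rest x
end

/-- `T(t) = (1 - 4t - √(1-8t))/(4t)`, the generating function (by edges) of labelled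
plane trees with increments `±1` and at least one edge; it satisfies `T = 2t(1+T)²`. -/
noncomputable def Tfun1 (t : ℝ) : ℝ := (1 - 4*t - Real.sqrt (1 - 8*t)) / (4*t)

/-!
Deleting the root of a plane tree leaves a forest, and a nonempty forest is a first subtree,
hanging from an edge labelled `±1`, followed by a forest. Summing over this decomposition turns
`A = ∑ t^|T|`, `B(x) = ∑ t^|T| L_T(x)` and `C(x, y) = ∑ t^|T| L_T(x) L_T(y)`, where
`L_T(x) = ∑_{v ∈ T} x^{ℓ(v)}`, into a closed system of polynomial equations, which for
`y = x⁻¹` and `x + x⁻¹ = 2 cos u` solves to the stated rational function of `T = A - 1` and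
`cos u`. All sums converge absolutely for `|t| < 1/8`, since a forest with `n` edges is
determined by a word of `3n` bits.

Of the two roots of `A = 1 + 2tA²`, the tree sum is the one with `4tA < 1`: at `x = 1` the
equation for `B` reads `(B(1) - A)(1 - 4tA) = 2tA²`, and `B(1) - A = ∑ |T| t^|T| ≥ 0`.
-/

section InfiniteSums

variable {α β γ δ : Type*}

theorem hasSum_list {M : Type*} [AddCommGroup M] [TopologicalSpace M] [IsTopologicalAddGroup M]
    {F : List α → M} {G : α × List α → M} {s : M} (hG : HasSum G s)
    (hFG : ∀ a l, F (a :: l) = G (a, l)) : HasSum F (F [] + s) := by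
  classical
  have hF : HasSum (Function.update F [] 0) s := by
    refine (Function.Injective.hasSum_iff (g := fun p : α × List α => p.1 :: p.2)
      (fun p q h => Prod.ext (List.cons.inj h).1 (List.cons.inj h).2) ?_).1 ?_
    · rintro (_ | ⟨a, l⟩) hl
      · simp
      · exact absurd ⟨(a, l), rfl⟩ hl
    · convert hG using 1
      ext ⟨a, l⟩
      simp [hFG]
  simpa using hF.update [] (F [])

theorem hasSum_mul_mul {R : Type*} [NormedRing R] [CompleteSpace R] [Fintype β] (φ : β → R)
    {ψ : γ → R} {χ : δ → R} (hψ : Summable fun c => ‖ψ c‖) (hχ : Summable fun d => ‖χ d‖) :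
    HasSum (fun p : (β × γ) × δ => φ p.1.1 * ψ p.1.2 * χ p.2)
      ((∑ b, φ b) * (∑' c, ψ c) * ∑' d, χ d) := by
  have hφψ : Summable fun q : β × γ => ‖φ q.1 * ψ q.2‖ := (Summable.of_finite).mul_norm hψ
  rw [← tsum_fintype (L := .unconditional β),
    tsum_mul_tsum_of_summable_norm (Summable.of_finite) hψ, tsum_mul_tsum_of_summable_norm hφψ hχ]
  exact (summable_mul_of_summable_norm hφψ hχ).hasSum

end InfiniteSums

section Tfun1

variable {t : ℝ}

theorem four_mul_mul_one_add_Tfun1 (ht0 : t ≠ 0) : 4 * t * (1 + Tfun1 t) = 1 - √(1 - 8 * t) := by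
  rw [Tfun1]
  field_simp
  ring

theorem Tfun1_eq_two_mul_mul_one_add_sq (ht0 : t ≠ 0) (ht : t ≤ 1 / 8) : Tfun1 t = 2 * t * (1 + Tfun1 t) ^ 2 := by
  have hs := Real.sq_sqrt (show 0 ≤ 1 - 8 * t by linarith)
  refine mul_left_cancel₀ (mul_ne_zero (by norm_num : (8 : ℝ) ≠ 0) ht0) ?_
  linear_combination (1 + √(1 - 8 * t) - 4 * t * (1 + Tfun1 t)) * four_mul_mul_one_add_Tfun1 ht0
    - hs

theorem four_mul_mul_one_add_Tfun1_lt_one (ht0 : t ≠ 0) (ht : t < 1 / 8) :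
    4 * t * (1 + Tfun1 t) < 1 := by
  rw [four_mul_mul_one_add_Tfun1 ht0]
  linarith [Real.sqrt_pos.2 (show 0 < 1 - 8 * t by linarith)]

theorem Tfun1_nonneg (ht0 : 0 < t) (ht : t ≤ 1 / 8) : 0 ≤ Tfun1 t := by
  rw [Tfun1_eq_two_mul_mul_one_add_sq ht0.ne' ht]
  positivity

theorem Tfun1_lt_one (ht0 : 0 < t) (ht : t < 1 / 8) : Tfun1 t < 1 := by
  nlinarith [Tfun1_eq_two_mul_mul_one_add_sq ht0.ne' ht.le,
    four_mul_mul_one_add_Tfun1_lt_one ht0.ne' ht, Tfun1_nonneg ht0 ht.le]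

theorem eq_one_add_Tfun1_of_eq_of_lt {a : ℝ} (ht0 : t ≠ 0) (ht : t < 1 / 8)
    (ha : a = 1 + 2 * t * a ^ 2) (hlt : 4 * t * a < 1) : a = 1 + Tfun1 t := by
  have hfac : (a - (1 + Tfun1 t)) * (1 - 2 * t * (a + (1 + Tfun1 t))) = 0 := by
    linear_combination ha - Tfun1_eq_two_mul_mul_one_add_sq ht0 ht.le
  have hTlt := four_mul_mul_one_add_Tfun1_lt_one ht0 ht
  exact sub_eq_zero.1 ((mul_eq_zero.1 hfac).resolve_right (by linarith))

end Tfun1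

namespace PTree1

def nodeEquiv : List (Bool × PTree1) ≃ PTree1 where
  toFun := node
  invFun | node cs => cs
  left_inv _ := rfl
  right_inv | node _ => rfl

mutual
def encode : PTree1 → List Bool
  | node cs => encodeList cs
def encodeList : List (Bool × PTree1) → List Bool
  | [] => []
  | (b, T) :: cs => true :: b :: (encode T ++ false :: encodeList cs)
end

mutual
theorem length_encode : ∀ T : PTree1, (encode T).length = 3 * T.edges
  | node cs => by rw [encode, edges]; exact length_encodeList cs
theorem length_encodeList : ∀ cs : List (Bool × PTree1), (encodeList cs).length = 3 * edgesList cs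
  | [] => rfl
  | (b, T) :: cs => by
      simp only [encodeList, edgesList, List.length_cons, List.length_append, length_encode T,
        length_encodeList cs]
      ring
end

theorem encodeList_append_false_inj : ∀ (cs₁ cs₂ : List (Bool × PTree1)) (l₁ l₂ : List Bool),
    encodeList cs₁ ++ false :: l₁ = encodeList cs₂ ++ false :: l₂ → cs₁ = cs₂ ∧ l₁ = l₂
  | [], [], l₁, l₂, h => ⟨rfl, by simpa [encodeList] using h⟩
  | [], _ :: _, _, _, h => by simp [encodeList] at h
  | _ :: _, [], _, _, h => by simp [encodeList] at h
  | (b₁, node ds₁) :: cs₁, (b₂, node ds₂) :: cs₂, l₁, l₂, h => by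
      simp only [encodeList, encode, List.cons_append, List.append_assoc, List.cons.injEq] at h
      obtain ⟨-, hb, h⟩ := h
      obtain ⟨hd, h⟩ := encodeList_append_false_inj ds₁ ds₂ _ _ h
      obtain ⟨hcs, hl⟩ := encodeList_append_false_inj cs₁ cs₂ _ _ h
      exact ⟨by rw [hb, hd, hcs], hl⟩

theorem encodeList_injective : Function.Injective encodeList := fun cs₁ cs₂ h =>
  (encodeList_append_false_inj cs₁ cs₂ [] [] (by rw [h])).1

theorem summable_comp_edgesList {g : ℕ → ℝ} (hg0 : 0 ≤ g) (hg : Summable fun n => 8 ^ n * g n) :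
    Summable fun cs : List (Bool × PTree1) => g (edgesList cs) := by
  let code (cs : List (Bool × PTree1)) : Σ n, List.Vector Bool (3 * n) :=
    ⟨edgesList cs, encodeList cs, length_encodeList cs⟩
  have hcode : Function.Injective code := fun cs₁ cs₂ h =>
    encodeList_injective (congrArg (fun p => p.2.1) h)
  have hsigma : Summable fun p : Σ n, List.Vector Bool (3 * n) => g p.1 :=
    (summable_sigma_of_nonneg fun p => hg0 p.1).2
      ⟨fun _ => .of_finite, by simpa [card_vector, pow_mul] using hg⟩
  exact hsigma.comp_injective hcode

theorem summable_norm_pow_edgesList_mul {t : ℂ} (ht : ‖t‖ < 1 / 8)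
    {f : List (Bool × PTree1) → ℂ} (hf : ∀ cs, ‖f cs‖ ≤ ((edgesList cs : ℝ) + 1) ^ 2) :
    Summable fun cs => ‖t ^ edgesList cs * f cs‖ := by
  have hgeom : Summable fun n : ℕ => ((n : ℝ) + 1) ^ 2 * (8 * ‖t‖) ^ n := by
    have hr : ‖8 * ‖t‖‖ < 1 := by
      rw [Real.norm_of_nonneg (by positivity)]; linarith
    have h2 := summable_pow_mul_geometric_of_norm_lt_one 2 hr
    have h1 := summable_pow_mul_geometric_of_norm_lt_one 1 hr
    have h0 := summable_pow_mul_geometric_of_norm_lt_one 0 hr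
    exact (h2.add ((h1.mul_left 2).add h0)).congr fun n => by ring
  refine .of_nonneg_of_le (fun _ => norm_nonneg _) (fun cs => ?_)
    (summable_comp_edgesList (g := fun n => ‖t‖ ^ n * ((n : ℝ) + 1) ^ 2)
      (fun n => by positivity) (hgeom.congr fun n => by ring))
  rw [norm_mul, norm_pow]
  exact mul_le_mul_of_nonneg_left (hf cs) (by positivity)

theorem summable_norm_pow_edges_mul {t : ℂ} (ht : ‖t‖ < 1 / 8) {f : PTree1 → ℂ}
    (hf : ∀ T, ‖f T‖ ≤ ((T.edges : ℝ) + 1) ^ 2) :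
    Summable fun T => ‖t ^ T.edges * f T‖ :=
  nodeEquiv.summable_iff.1 (summable_norm_pow_edgesList_mul ht fun cs => hf (node cs))

mutual
theorem norm_labelSum_le {x : ℂ} (hx : ‖x‖ = 1) : ∀ T : PTree1, ‖T.labelSum x‖ ≤ T.edges + 1
  | node cs => by
      rw [labelSum, edges, add_comm (edgesList cs : ℝ)]
      exact (norm_add_le _ _).trans (by simpa using norm_labelSumList_le hx cs)
theorem norm_labelSumList_le {x : ℂ} (hx : ‖x‖ = 1) :
    ∀ cs : List (Bool × PTree1), ‖labelSumList cs x‖ ≤ edgesList cs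
  | [] => by simp [labelSumList, edgesList]
  | (b, T) :: cs => by
      have hw : ‖if b then x else x⁻¹‖ = 1 := by cases b <;> simp [hx]
      rw [labelSumList, edgesList]
      calc _ ≤ ‖(if b then x else x⁻¹) * T.labelSum x‖ + ‖labelSumList cs x‖ := norm_add_le _ _
        _ ≤ (T.edges + 1) + edgesList cs := by
          rw [norm_mul, hw, one_mul]
          exact add_le_add (norm_labelSum_le hx T) (norm_labelSumList_le hx cs)
        _ = _ := by push_cast; ring
end

mutual
theorem labelSum_one : ∀ T : PTree1, T.labelSum 1 = T.edges + 1
  | node cs => by rw [labelSum, edges, labelSumList_one cs, add_comm]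
theorem labelSumList_one : ∀ cs : List (Bool × PTree1), labelSumList cs 1 = edgesList cs
  | [] => by simp [labelSumList, edgesList]
  | (b, T) :: cs => by
      rw [labelSumList, edgesList, labelSum_one T, labelSumList_one cs]
      cases b <;> simp
end

theorem tsum_pow_edges_eq_tsum_pow_edgesList (t : ℂ) :
    ∑' T : PTree1, t ^ T.edges = ∑' cs : List (Bool × PTree1), t ^ edgesList cs :=
  (nodeEquiv.tsum_eq _).symm

section GeneratingFunctions

variable {t : ℂ} (ht : ‖t‖ < 1 / 8) {x y : ℂ} (hx : ‖x‖ = 1) (hy : ‖y‖ = 1)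
include ht

theorem summable_norm_pow_edges : Summable fun T : PTree1 => ‖t ^ T.edges‖ := by
  simpa using summable_norm_pow_edges_mul ht (f := 1) fun T => by simp [one_le_pow₀]

theorem summable_norm_pow_edgesList :
    Summable fun cs : List (Bool × PTree1) => ‖t ^ edgesList cs‖ := by
  simpa using summable_norm_pow_edgesList_mul ht (f := 1) fun cs => by simp [one_le_pow₀]

theorem tsum_pow_edges_eq :
    ∑' T : PTree1, t ^ T.edges = 1 + 2 * t * (∑' T : PTree1, t ^ T.edges) ^ 2 := by
  have h := hasSum_list (F := fun cs => t ^ edgesList cs)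
    (hasSum_mul_mul (fun _ : Bool => t) (summable_norm_pow_edges ht)
      (summable_norm_pow_edgesList ht)) fun _ _ => by simp only [edgesList]; ring
  rw [tsum_pow_edges_eq_tsum_pow_edgesList] at h ⊢
  refine h.tsum_eq.trans ?_
  simp only [edgesList, Fintype.sum_bool]
  ring

include hx

theorem summable_norm_pow_edges_mul_labelSum :
    Summable fun T : PTree1 => ‖t ^ T.edges * T.labelSum x‖ :=
  summable_norm_pow_edges_mul ht fun T =>
    (norm_labelSum_le hx T).trans (le_self_pow₀ (by simp) two_ne_zero)

theorem summable_norm_pow_edgesList_mul_labelSumList :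
    Summable fun cs : List (Bool × PTree1) => ‖t ^ edgesList cs * labelSumList cs x‖ :=
  summable_norm_pow_edgesList_mul ht fun cs =>
    (norm_labelSumList_le hx cs).trans ((le_add_of_nonneg_right zero_le_one).trans
      (le_self_pow₀ (by simp) two_ne_zero))

theorem tsum_pow_edges_mul_labelSum_eq_add :
    ∑' T : PTree1, t ^ T.edges * T.labelSum x =
      ∑' T : PTree1, t ^ T.edges + ∑' cs, t ^ edgesList cs * labelSumList cs x := by
  rw [tsum_pow_edges_eq_tsum_pow_edgesList, ← Summable.tsum_add
    (summable_norm_pow_edgesList ht).of_norm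
    (summable_norm_pow_edgesList_mul_labelSumList ht hx).of_norm, ← nodeEquiv.tsum_eq]
  refine tsum_congr fun cs => ?_
  simp only [nodeEquiv, Equiv.coe_fn_mk, edges, labelSum]
  ring

theorem tsum_pow_edges_mul_labelSum_sub_eq :
    ∑' T : PTree1, t ^ T.edges * T.labelSum x - ∑' T : PTree1, t ^ T.edges =
      t * (x + x⁻¹) * (∑' T : PTree1, t ^ T.edges * T.labelSum x) * ∑' T : PTree1, t ^ T.edges
      + 2 * t * (∑' T : PTree1, t ^ T.edges) *
        (∑' T : PTree1, t ^ T.edges * T.labelSum x - ∑' T : PTree1, t ^ T.edges) := by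
  have h := hasSum_list (F := fun cs => t ^ edgesList cs * labelSumList cs x)
    ((hasSum_mul_mul (fun b : Bool => t * if b then x else x⁻¹)
      (summable_norm_pow_edges_mul_labelSum ht hx) (summable_norm_pow_edgesList ht)).add
    (hasSum_mul_mul (fun _ : Bool => t) (summable_norm_pow_edges ht)
      (summable_norm_pow_edgesList_mul_labelSumList ht hx)))
    fun _ _ => by simp only [edgesList, labelSumList]; ring
  rw [← tsum_pow_edges_eq_tsum_pow_edgesList, tsum_pow_edges_mul_labelSum_eq_add ht hx] at h
  rw [tsum_pow_edges_mul_labelSum_eq_add ht hx, add_sub_cancel_left]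
  refine h.tsum_eq.trans ?_
  simp only [labelSumList, Fintype.sum_bool, ↓reduceIte, Bool.false_eq_true]
  ring

include hy

theorem summable_norm_pow_edges_mul_labelSum_mul_labelSum :
    Summable fun T : PTree1 => ‖t ^ T.edges * T.labelSum x * T.labelSum y‖ := by
  simpa only [mul_assoc] using summable_norm_pow_edges_mul ht fun T => by
    rw [norm_mul, sq]
    exact mul_le_mul (norm_labelSum_le hx T) (norm_labelSum_le hy T) (norm_nonneg _)
      (by positivity)

theorem summable_norm_pow_edgesList_mul_labelSumList_mul_labelSumList :
    Summable fun cs : List (Bool × PTree1) =>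
      ‖t ^ edgesList cs * labelSumList cs x * labelSumList cs y‖ := by
  simpa only [mul_assoc] using summable_norm_pow_edgesList_mul ht fun cs => by
    rw [norm_mul, sq]
    exact mul_le_mul ((norm_labelSumList_le hx cs).trans (by simp))
      ((norm_labelSumList_le hy cs).trans (by simp)) (norm_nonneg _) (by positivity)

theorem tsum_pow_edges_mul_labelSum_mul_labelSum_eq_add :
    ∑' T : PTree1, t ^ T.edges * T.labelSum x * T.labelSum y =
      ∑' T : PTree1, t ^ T.edges + ∑' cs, t ^ edgesList cs * labelSumList cs x
        + ∑' cs, t ^ edgesList cs * labelSumList cs y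
        + ∑' cs, t ^ edgesList cs * labelSumList cs x * labelSumList cs y := by
  have h1 := (summable_norm_pow_edgesList ht).of_norm
  have hx' := (summable_norm_pow_edgesList_mul_labelSumList ht hx).of_norm
  have hy' := (summable_norm_pow_edgesList_mul_labelSumList ht hy).of_norm
  have hxy := (summable_norm_pow_edgesList_mul_labelSumList_mul_labelSumList ht hx hy).of_norm
  rw [tsum_pow_edges_eq_tsum_pow_edgesList, ← Summable.tsum_add h1 hx',
    ← Summable.tsum_add (h1.add hx') hy', ← Summable.tsum_add ((h1.add hx').add hy') hxy,
    ← nodeEquiv.tsum_eq]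
  refine tsum_congr fun cs => ?_
  simp only [nodeEquiv, Equiv.coe_fn_mk, edges, labelSum]
  ring

theorem tsum_pow_edges_mul_labelSum_mul_labelSum_sub_eq :
    ∑' T : PTree1, t ^ T.edges * T.labelSum x * T.labelSum y
        - ∑' T : PTree1, t ^ T.edges * T.labelSum x - ∑' T : PTree1, t ^ T.edges * T.labelSum y
        + ∑' T : PTree1, t ^ T.edges =
      t * (x * y + x⁻¹ * y⁻¹) * (∑' T : PTree1, t ^ T.edges * T.labelSum x * T.labelSum y)
          * ∑' T : PTree1, t ^ T.edges
        + t * (x + x⁻¹) * (∑' T : PTree1, t ^ T.edges * T.labelSum x)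
          * (∑' T : PTree1, t ^ T.edges * T.labelSum y - ∑' T : PTree1, t ^ T.edges)
        + t * (y + y⁻¹) * (∑' T : PTree1, t ^ T.edges * T.labelSum y)
          * (∑' T : PTree1, t ^ T.edges * T.labelSum x - ∑' T : PTree1, t ^ T.edges)
        + 2 * t * (∑' T : PTree1, t ^ T.edges) *
          (∑' T : PTree1, t ^ T.edges * T.labelSum x * T.labelSum y
            - ∑' T : PTree1, t ^ T.edges * T.labelSum x
            - ∑' T : PTree1, t ^ T.edges * T.labelSum y + ∑' T : PTree1, t ^ T.edges) := by
  have h := hasSum_list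
    (F := fun cs => t ^ edgesList cs * labelSumList cs x * labelSumList cs y)
    ((((hasSum_mul_mul (fun b : Bool => t * (if b then x else x⁻¹) * (if b then y else y⁻¹))
      (summable_norm_pow_edges_mul_labelSum_mul_labelSum ht hx hy)
      (summable_norm_pow_edgesList ht)).add
    (hasSum_mul_mul (fun b : Bool => t * if b then x else x⁻¹)
      (summable_norm_pow_edges_mul_labelSum ht hx)
      (summable_norm_pow_edgesList_mul_labelSumList ht hy))).add
    (hasSum_mul_mul (fun b : Bool => t * if b then y else y⁻¹)
      (summable_norm_pow_edges_mul_labelSum ht hy)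
      (summable_norm_pow_edgesList_mul_labelSumList ht hx))).add
    (hasSum_mul_mul (fun _ : Bool => t) (summable_norm_pow_edges ht)
      (summable_norm_pow_edgesList_mul_labelSumList_mul_labelSumList ht hx hy)))
    fun _ _ => by simp only [edgesList, labelSumList]; ring
  rw [← tsum_pow_edges_eq_tsum_pow_edgesList,
    tsum_pow_edges_mul_labelSum_mul_labelSum_eq_add ht hx hy,
    tsum_pow_edges_mul_labelSum_eq_add ht hx, tsum_pow_edges_mul_labelSum_eq_add ht hy] at h
  rw [tsum_pow_edges_mul_labelSum_mul_labelSum_eq_add ht hx hy,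
    tsum_pow_edges_mul_labelSum_eq_add ht hx, tsum_pow_edges_mul_labelSum_eq_add ht hy]
  have h' := h.tsum_eq
  simp only [labelSumList, Fintype.sum_bool, ↓reduceIte, Bool.false_eq_true] at h'
  linear_combination h'

end GeneratingFunctions

theorem tsum_pow_edges_mul_labelSum_mul_labelSum_inv_mul {t x c τ : ℂ} (ht : ‖t‖ < 1 / 8)
    (hx : ‖x‖ = 1) (hc : x + x⁻¹ = 2 * c) (hτ : ∑' T : PTree1, t ^ T.edges = 1 + τ) :
    (∑' T : PTree1, t ^ T.edges * T.labelSum x * T.labelSum x⁻¹) * ((1 - τ) * (1 - τ * c) ^ 2)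
      = (1 + τ) * (1 + τ ^ 2 * c ^ 2) := by
  have hx0 : x ≠ 0 := norm_ne_zero_iff.1 (by rw [hx]; exact one_ne_zero)
  have hxinv : ‖x⁻¹‖ = 1 := by rw [norm_inv, hx, inv_one]
  have hA := tsum_pow_edges_eq ht
  have hBx := tsum_pow_edges_mul_labelSum_sub_eq ht hx
  have hBy := tsum_pow_edges_mul_labelSum_sub_eq ht hxinv
  have hC := tsum_pow_edges_mul_labelSum_mul_labelSum_sub_eq ht hx hxinv
  rw [inv_inv, add_comm x⁻¹, hc] at hBy
  rw [inv_inv, mul_inv_cancel₀ hx0, inv_mul_cancel₀ hx0, hc, add_comm x⁻¹, hc] at hC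
  rw [hc] at hBx
  rw [hτ] at hA hBx hBy hC
  set Bx := ∑' T : PTree1, t ^ T.edges * T.labelSum x
  set By := ∑' T : PTree1, t ^ T.edges * T.labelSum x⁻¹
  set C := ∑' T : PTree1, t ^ T.edges * T.labelSum x * T.labelSum x⁻¹
  have hBx' : Bx * (1 - c * τ) = 1 + τ := by
    linear_combination (1 + τ) * hBx - (c * Bx + Bx - (1 + τ)) * hA
  have hBy' : By * (1 - c * τ) = 1 + τ := by
    linear_combination (1 + τ) * hBy - (c * By + By - (1 + τ)) * hA
  have hC' : C * (1 - τ) = Bx + By - (1 + τ) + 4 * t * c ^ 2 * τ * (1 + τ) * Bx * By := by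
    linear_combination (1 + τ) * hC - (2 * C - Bx - By + (1 + τ)) * hA
      + 2 * t * c * (1 + τ) * (Bx * hBy' + By * hBx')
  linear_combination (1 - c * τ) ^ 2 * hC'
    + (1 - c * τ) * (1 + 4 * t * c ^ 2 * τ * (1 + τ) * By) * hBx'
    + (1 - c * τ + 4 * t * c ^ 2 * τ * (1 + τ) ^ 2) * hBy' - 2 * c ^ 2 * τ * (1 + τ) * hA

theorem tsum_pow_edges_eq_one_add_Tfun1 {t : ℝ} (ht0 : 0 < t) (ht : t < 1 / 8) :
    ∑' T : PTree1, (t : ℂ) ^ T.edges = 1 + Tfun1 t := by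
  have ht' : ‖(t : ℂ)‖ < 1 / 8 := by rwa [Complex.norm_real, Real.norm_of_nonneg ht0.le]
  set a := ∑' T : PTree1, t ^ T.edges
  set v := ∑' cs : List (Bool × PTree1), t ^ edgesList cs * edgesList cs
  have ha : ∑' T : PTree1, (t : ℂ) ^ T.edges = a := by simp [a, Complex.ofReal_tsum]
  have hv : ∑' cs, (t : ℂ) ^ edgesList cs * labelSumList cs 1 = v := by
    simp [v, Complex.ofReal_tsum, labelSumList_one]
  have hquad : a = 1 + 2 * t * a ^ 2 := by exact_mod_cast ha ▸ tsum_pow_edges_eq ht'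
  have hlin : v * (1 - 4 * t * a) = 2 * t * a ^ 2 := by
    have h := tsum_pow_edges_mul_labelSum_sub_eq ht' norm_one
    rw [tsum_pow_edges_mul_labelSum_eq_add ht' norm_one, ha, hv] at h
    exact_mod_cast (by linear_combination h : (v : ℂ) * (1 - 4 * t * a) = 2 * t * a ^ 2)
  have hlt : 4 * t * a < 1 := by
    by_contra! hge
    nlinarith [mul_nonneg (tsum_nonneg fun cs => by positivity : 0 ≤ v) (sub_nonneg.2 hge),
      sq_nonneg a]
  rw [ha, eq_one_add_Tfun1_of_eq_of_lt ht0.ne' ht hquad hlt, ofReal_add, ofReal_one]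

end PTree1

/-- For plane trees with edge increments `±1`:
`F₂(t, e^{iu}, e^{-iu}) = (1+T)(1+T² cos²u)/((1-T)(1-T cos u)²)` with `T = 2t(1+T)²`. -/
theorem F2_plane_pm1_specialization (t u : ℝ) (ht0 : 0 < t) (ht : t < 1/8) :
    (Tfun1 t : ℂ) = 2*t*(1 + (Tfun1 t : ℂ))^2 ∧
    (∑' T : PTree1, (t : ℂ)^T.edges
        * T.labelSum (Complex.exp (Complex.I * u))
        * T.labelSum (Complex.exp (-Complex.I * u)))
      = (1 + (Tfun1 t : ℂ)) * (1 + (Tfun1 t : ℂ)^2 * (Real.cos u : ℂ)^2) /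
        ((1 - (Tfun1 t : ℂ)) * (1 - (Tfun1 t : ℂ) * (Real.cos u : ℂ))^2) := by
  refine ⟨by exact_mod_cast Tfun1_eq_two_mul_mul_one_add_sq ht0.ne' ht.le, ?_⟩
  have ht' : ‖(t : ℂ)‖ < 1 / 8 := by rwa [Complex.norm_real, Real.norm_of_nonneg ht0.le]
  have hx : ‖exp (I * u)‖ = 1 := by rw [mul_comm]; exact norm_exp_ofReal_mul_I u
  have hinv : (exp (I * u))⁻¹ = exp (-I * u) := by rw [← exp_neg, neg_mul]
  have hcos : exp (I * u) + (exp (I * u))⁻¹ = 2 * (Real.cos u : ℂ) := by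
    rw [hinv, ofReal_cos, cos]; ring_nf
  have hT0 := Tfun1_nonneg ht0 ht.le
  have hT1 := Tfun1_lt_one ht0 ht
  have hden : (1 - (Tfun1 t : ℂ)) * (1 - (Tfun1 t : ℂ) * (Real.cos u : ℂ)) ^ 2 ≠ 0 := by
    norm_cast
    have := Real.cos_le_one u
    have := Real.neg_one_le_cos u
    exact mul_ne_zero (by linarith) (pow_ne_zero 2 (by nlinarith))
  rw [← hinv, eq_div_iff hden]
  exact PTree1.tsum_pow_edges_mul_labelSum_mul_labelSum_inv_mul ht' hx hcos
    (PTree1.tsum_pow_edges_eq_one_add_Tfun1 ht0 ht)
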